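/- arXiv:math/0011196 — 2 statements merged into one kernel-verified Lean document; each statement's English description precedes it below -/
import Mathlib

section
/- For all real numbers a > 0, b > 0 and n ≥ 0, letting n₊ be the smallest integer ≥ n, one has (a + b)^n ≤ ∑_{j=0}^{n₊} C(n₊, j) a^{j n / n₊} b^{(n₊ - j) n / n₊} (with the convention n₊/n := 1 if n = 0). -/
open Finset NNReal

theorem stmt_0 (a b n : ℝ) (ha : 0 < a) (hb : 0 < b) (hn : 0 ≤ n) :
    (a + b) ^ n ≤ ∑ j ∈ Finset.range (⌈n⌉₊ + 1), (Nat.choose ⌈n⌉₊ j : ℝ) *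
      a ^ ((j : ℝ) * n / (⌈n⌉₊ : ℝ)) * b ^ (((⌈n⌉₊ - j : ℕ) : ℝ) * n / (⌈n⌉₊ : ℝ)) := by
  rcases eq_or_lt_of_le hn with h0 | h0
  · simp [← h0]
  set m := ⌈n⌉₊ with hm
  have hmpos : 0 < m := Nat.ceil_pos.mpr h0
  have hmR : (0:ℝ) < (m:ℝ) := by exact_mod_cast hmpos
  set t := n / (m:ℝ) with ht
  have htpos : 0 < t := div_pos h0 hmR
  have ht1 : t ≤ 1 := by
    rw [ht, div_le_one hmR]
    exact Nat.le_ceil n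
  have htm : t * (m:ℝ) = n := div_mul_cancel₀ n hmR.ne'
  -- (a+b)^n = ((a+b)^t)^m
  have key : (a + b) ^ n = ((a + b) ^ t) ^ m := by
    rw [← Real.rpow_natCast ((a+b)^t) m, ← Real.rpow_mul (by positivity), htm]
  rw [key]
  -- (a+b)^t ≤ a^t + b^t
  have hsub : (a + b) ^ t ≤ a ^ t + b ^ t := by
    have := NNReal.rpow_add_le_add_rpow a.toNNReal b.toNNReal htpos.le ht1
    have h2 : ((a.toNNReal + b.toNNReal : ℝ≥0) : ℝ) ^ t ≤
        ((a.toNNReal ^ t + b.toNNReal ^ t : ℝ≥0) : ℝ) := by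
      rw [← NNReal.coe_rpow]; exact_mod_cast this
    simpa [NNReal.coe_rpow, Real.coe_toNNReal _ ha.le, Real.coe_toNNReal _ hb.le,
      Real.coe_toNNReal _ (by positivity : (0:ℝ) ≤ a + b)] using h2
  calc ((a + b) ^ t) ^ m ≤ (a ^ t + b ^ t) ^ m := by
        apply pow_le_pow_left₀ (by positivity) hsub
    _ = ∑ j ∈ Finset.range (m + 1), (Nat.choose m j : ℝ) *
        a ^ ((j : ℝ) * n / (m : ℝ)) * b ^ (((m - j : ℕ) : ℝ) * n / (m : ℝ)) := by
        rw [add_pow]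
        refine Finset.sum_congr rfl fun j hj => ?_
        rw [← Real.rpow_natCast (a^t) j, ← Real.rpow_natCast (b^t) (m-j),
          ← Real.rpow_mul ha.le, ← Real.rpow_mul hb.le]
        have e1 : t * (j:ℝ) = (j:ℝ) * n / (m:ℝ) := by rw [ht]; ring
        have e2 : t * ((m-j:ℕ):ℝ) = ((m-j:ℕ):ℝ) * n / (m:ℝ) := by rw [ht]; ring
        rw [e1, e2]; ring
end

section
/- Let E(s) := s^s for s > 0 and E(0) := 1, and for a > d/2 and 0 ≤ ℓ ≤ a define E_{ℓ,a,d} := ( E(ℓ/(2a)) E(1/2 − ℓ/(2a)) / ( E(1/2 + ℓ/(2a)) E(1 − ℓ/(2a)) ) )^{d/2}. Then the function ℓ ↦ E_{ℓ,a,d} on [0,a] attains its maximum value 1 at ℓ = 0 and ℓ = a, and its minimum value (16/27)^{d/4} at ℓ = a/2. -/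
noncomputable section

/-- E(s) = s^s for s > 0, E(0) = 1. -/
def Efun (s : ℝ) : ℝ := if s = 0 then 1 else s ^ s

/-- The constant E_{ℓ,a,d}. -/
def Elad (d : ℕ) (a ℓ : ℝ) : ℝ :=
  ((Efun (ℓ / (2 * a)) * Efun (1 / 2 - ℓ / (2 * a))) /
      (Efun (1 / 2 + ℓ / (2 * a)) * Efun (1 - ℓ / (2 * a)))) ^ ((d : ℝ) / 2)

/-!
With `t = ℓ / (2a) ∈ [0, 1/2]`, the logarithm of the base of `E_{ℓ,a,d}` is
`g t = logEladBase t = t log t + (1/2 - t) log (1/2 - t) - (1/2 + t) log (1/2 + t) - (1 - t) log (1 - t)`.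
Its derivative is `log (t (1 - t)) - log ((1/2 - t)(1/2 + t))`, and
`t (1 - t) - (1/2 - t)(1/2 + t) = t - 1/4`, so `g` decreases on `[0, 1/4]` and increases on
`[1/4, 1/2]`. Hence `g ≤ g 0 = g (1/2) = 0` and `g ≥ g (1/4) = log (16/27) / 2`.
-/

open Real Set

lemma Efun_eq_exp {s : ℝ} (hs : 0 ≤ s) : Efun s = exp (s * log s) := by
  rcases hs.eq_or_lt with rfl | hs
  · simp [Efun]
  · rw [Efun, if_neg hs.ne', rpow_def_of_pos hs, mul_comm]

def logEladBase (t : ℝ) : ℝ :=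
  t * log t + (1 / 2 - t) * log (1 / 2 - t) - (1 / 2 + t) * log (1 / 2 + t) -
    (1 - t) * log (1 - t)

lemma continuous_logEladBase : Continuous logEladBase := by
  have h := continuous_mul_log
  unfold logEladBase
  exact ((h.add (h.comp (by fun_prop))).sub (h.comp (by fun_prop))).sub (h.comp (by fun_prop))

lemma hasDerivAt_logEladBase {t : ℝ} (h0 : 0 < t) (h2 : t < 1 / 2) :
    HasDerivAt logEladBase (log (t * (1 - t)) - log ((1 / 2 - t) * (1 / 2 + t))) t := by
  have hsub (c : ℝ) : HasDerivAt (fun x : ℝ => c - x) (-1) t := by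
    simpa using (hasDerivAt_id t).const_sub c
  have hadd : HasDerivAt (fun x : ℝ => 1 / 2 + x) 1 t := by
    simpa using (hasDerivAt_id t).const_add (1 / 2 : ℝ)
  have d1 := hasDerivAt_mul_log h0.ne'
  have d2 := (hasDerivAt_mul_log (by linarith : 1 / 2 - t ≠ 0)).comp t (hsub (1 / 2))
  have d3 := (hasDerivAt_mul_log (by linarith : 1 / 2 + t ≠ 0)).comp t hadd
  have d4 := (hasDerivAt_mul_log (by linarith : 1 - t ≠ 0)).comp t (hsub 1)
  refine (((d1.add d2).sub d3).sub d4).congr_deriv ?_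
  rw [log_mul h0.ne' (by linarith), log_mul (by linarith) (by linarith)]
  ring

lemma logEladBase_zero : logEladBase 0 = 0 := by
  simp [logEladBase]

lemma logEladBase_half : logEladBase (1 / 2) = 0 := by
  norm_num [logEladBase]

lemma logEladBase_quarter : logEladBase (1 / 4) = log (16 / 27) / 2 := by
  rw [show (16 / 27 : ℝ) = 1 / 4 / (3 / 4) ^ 3 by norm_num,
    log_div (by norm_num) (by norm_num), log_pow, logEladBase]
  norm_num
  ring

lemma strictAntiOn_logEladBase : StrictAntiOn logEladBase (Icc 0 (1 / 4)) := by
  refine strictAntiOn_of_deriv_neg (convex_Icc _ _) continuous_logEladBase.continuousOn ?_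
  rw [interior_Icc]
  rintro t ⟨h0, h4⟩
  rw [(hasDerivAt_logEladBase h0 (by linarith)).deriv, sub_neg]
  exact log_lt_log (by nlinarith) (by nlinarith)

lemma strictMonoOn_logEladBase : StrictMonoOn logEladBase (Icc (1 / 4) (1 / 2)) := by
  refine strictMonoOn_of_deriv_pos (convex_Icc _ _) continuous_logEladBase.continuousOn ?_
  rw [interior_Icc]
  rintro t ⟨h4, h2⟩
  rw [(hasDerivAt_logEladBase (by linarith) h2).deriv, sub_pos]
  exact log_lt_log (by nlinarith) (by nlinarith)

lemma logEladBase_nonpos {t : ℝ} (h0 : 0 ≤ t) (h2 : t ≤ 1 / 2) : logEladBase t ≤ 0 := by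
  rcases le_total t (1 / 4) with h | h
  · exact (strictAntiOn_logEladBase.antitoneOn ⟨le_rfl, by norm_num⟩ ⟨h0, h⟩ h0).trans_eq
      logEladBase_zero
  · exact (strictMonoOn_logEladBase.monotoneOn ⟨h, h2⟩ ⟨by norm_num, le_rfl⟩ h2).trans_eq
      logEladBase_half

lemma logEladBase_quarter_le {t : ℝ} (h0 : 0 ≤ t) (h2 : t ≤ 1 / 2) :
    logEladBase (1 / 4) ≤ logEladBase t := by
  rcases le_total t (1 / 4) with h | h
  · exact strictAntiOn_logEladBase.antitoneOn ⟨h0, h⟩ ⟨by norm_num, le_rfl⟩ h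
  · exact strictMonoOn_logEladBase.monotoneOn ⟨le_rfl, by norm_num⟩ ⟨h, h2⟩ h

lemma Efun_ratio_eq_exp {t : ℝ} (h0 : 0 ≤ t) (h2 : t ≤ 1 / 2) :
    Efun t * Efun (1 / 2 - t) / (Efun (1 / 2 + t) * Efun (1 - t)) = exp (logEladBase t) := by
  rw [Efun_eq_exp h0, Efun_eq_exp (by linarith), Efun_eq_exp (by linarith),
    Efun_eq_exp (by linarith), ← exp_add, ← exp_add, ← exp_sub, logEladBase]
  ring_nf

lemma div_two_mul_le_half {a ℓ : ℝ} (ha : 0 < a) (hℓa : ℓ ≤ a) : ℓ / (2 * a) ≤ 1 / 2 := by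
  rw [div_le_iff₀ (by positivity)]
  linarith

lemma Elad_eq_exp (d : ℕ) {a ℓ : ℝ} (ha : 0 < a) (hℓ0 : 0 ≤ ℓ) (hℓa : ℓ ≤ a) :
    Elad d a ℓ = exp (logEladBase (ℓ / (2 * a)) * (d / 2)) := by
  rw [Elad, Efun_ratio_eq_exp (by positivity) (div_two_mul_le_half ha hℓa), exp_mul]

theorem stmt_3_general (d : ℕ) (a : ℝ) (ha : (d : ℝ) / 2 < a) :
    (∀ ℓ : ℝ, 0 ≤ ℓ → ℓ ≤ a →
      Elad d a ℓ ≤ 1 ∧ (16 / 27 : ℝ) ^ ((d : ℝ) / 4) ≤ Elad d a ℓ) ∧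
    Elad d a 0 = 1 ∧ Elad d a a = 1 ∧ Elad d a (a / 2) = (16 / 27 : ℝ) ^ ((d : ℝ) / 4) := by
  have hd : (0 : ℝ) ≤ d / 2 := by positivity
  have ha0 : 0 < a := hd.trans_lt ha
  have hmin : (16 / 27 : ℝ) ^ ((d : ℝ) / 4) = exp (logEladBase (1 / 4) * (d / 2)) := by
    rw [rpow_def_of_pos (by norm_num), logEladBase_quarter]
    ring_nf
  refine ⟨fun ℓ hℓ0 hℓa => ?_, ?_, ?_, ?_⟩
  · have ht0 : 0 ≤ ℓ / (2 * a) := by positivity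
    have ht2 := div_two_mul_le_half ha0 hℓa
    rw [Elad_eq_exp d ha0 hℓ0 hℓa, hmin, exp_le_one_iff, exp_le_exp]
    exact ⟨mul_nonpos_of_nonpos_of_nonneg (logEladBase_nonpos ht0 ht2) hd,
      mul_le_mul_of_nonneg_right (logEladBase_quarter_le ht0 ht2) hd⟩
  · simp [Elad_eq_exp d ha0 le_rfl ha0.le, logEladBase_zero]
  · rw [Elad_eq_exp d ha0 ha0.le le_rfl, show a / (2 * a) = 1 / 2 by field_simp, logEladBase_half]
    simp
  · rw [Elad_eq_exp d ha0 (by positivity) (by linarith),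
      show a / 2 / (2 * a) = 1 / 4 by field_simp; ring, hmin]

theorem stmt_3 (d : ℕ) (hd : 0 < d) (a : ℝ) (ha : (d : ℝ) / 2 < a) :
    (∀ ℓ : ℝ, 0 ≤ ℓ → ℓ ≤ a →
      Elad d a ℓ ≤ 1 ∧ (16 / 27 : ℝ) ^ ((d : ℝ) / 4) ≤ Elad d a ℓ) ∧
    Elad d a 0 = 1 ∧ Elad d a a = 1 ∧ Elad d a (a / 2) = (16 / 27 : ℝ) ^ ((d : ℝ) / 4) :=
  stmt_3_general d a ha

end
end
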